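/- arXiv:1504.02947 — 2 statements merged into one kernel-verified Lean document; each statement's English description precedes it below -/
import Mathlib

section
/- Let G = ⟨Q, q_I, Σ, Δ, Obs⟩ be a non-weighted game arena with partial observation and let 𝒰 ⊆ Q be a set of unsafe states that are trapping (i.e., (u,σ,q) ∈ Δ and u ∈ 𝒰 imply u = q). Define the weight function w mapping each transition (u,σ,q) ∈ Δ with u ∈ 𝒰 to −1 and every other transition to 0, and let G_w be the resulting WGA. Then for every lmax ≥ 1 the following are equivalent: (i) Eve wins the safety objective Safe(𝒰) = {ψ ∈ plays(G) : ∀π ∈ γ(ψ), π never visits a state of 𝒰}; (ii) Eve wins MPInf(0) in G_w; (iii) Eve wins DirFix(0,lmax) in G_w; (iv) Eve wins UFix(0,lmax) in G_w; (v) Eve wins Fix(0,lmax) in G_w. -/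
/-!
Because unsafe states are trapping, every concretization of a play either avoids `U` forever,
and then all its weights are `0`, or enters `U` and from then on only takes weight `-1`
transitions. Hence on every abstract path safety, `MPInf(0)`, `DirFix(0,lmax)`, `UFix(0,lmax)`
and `Fix(0,lmax)` hold or fail together, and one strategy wins all of them at once.
-/

open scoped Classical

/-- A weighted game arena with partial observation. -/
structure WGA where
  Q : Type
  fintypeQ : Fintype Q
  qI : Q
  A : Type
  fintypeA : Fintype A
  nonemptyA : Nonempty A
  Δ : Q → A → Q → Prop
  total : ∀ q a, ∃ q', Δ q a q'
  w : Q → A → Q → ℤ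
  Obs : Set (Set Q)
  obs_empty : ∅ ∉ Obs
  obs_partition : ∀ q : Q, ∃! o, o ∈ Obs ∧ q ∈ o

attribute [instance] WGA.fintypeQ WGA.fintypeA WGA.nonemptyA

namespace WGA

variable (G : WGA)

/-- A concrete path compatible with the given sequences of observations and actions. -/
def Concretizes (obs : ℕ → Set G.Q) (act : ℕ → G.A) (π : ℕ → G.Q) : Prop :=
  (∀ i, π i ∈ obs i) ∧ ∀ i, G.Δ (π i) (act i) (π (i + 1))

/-- Plays: infinite abstract paths starting at the initial observation. -/
def IsPlay (obs : ℕ → Set G.Q) (act : ℕ → G.A) : Prop :=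
  (∀ i, obs i ∈ G.Obs) ∧ G.qI ∈ obs 0 ∧ ∃ π, G.Concretizes obs act π

/-- Sum of the `j` transition weights starting at position `i`. -/
def winSum (π : ℕ → G.Q) (act : ℕ → G.A) (i j : ℕ) : ℤ :=
  ∑ k ∈ Finset.range j, G.w (π (i + k)) (act (i + k)) (π (i + k + 1))

/-- Good window at position `i` with window size bound `lmax`. -/
def GW (ν : ℚ) (i lmax : ℕ) (π : ℕ → G.Q) (act : ℕ → G.A) : Prop :=
  ∃ j, 1 ≤ j ∧ j ≤ lmax ∧ ν ≤ (G.winSum π act i j : ℚ) / (j : ℚ)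

def DirFix (ν : ℚ) (lmax : ℕ) (obs : ℕ → Set G.Q) (act : ℕ → G.A) : Prop :=
  ∀ π, G.Concretizes obs act π → ∀ i, G.GW ν i lmax π act

def UFix (ν : ℚ) (lmax : ℕ) (obs : ℕ → Set G.Q) (act : ℕ → G.A) : Prop :=
  ∃ i, ∀ π, G.Concretizes obs act π → ∀ j, i ≤ j → G.GW ν j lmax π act

def Fix (ν : ℚ) (lmax : ℕ) (obs : ℕ → Set G.Q) (act : ℕ → G.A) : Prop :=
  ∀ π, G.Concretizes obs act π → ∃ i, ∀ j, i ≤ j → G.GW ν j lmax π act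

def UDirBnd (ν : ℚ) (obs : ℕ → Set G.Q) (act : ℕ → G.A) : Prop :=
  ∃ lmax, 1 ≤ lmax ∧ ∀ π, G.Concretizes obs act π → ∀ i, G.GW ν i lmax π act

def DirBnd (ν : ℚ) (obs : ℕ → Set G.Q) (act : ℕ → G.A) : Prop :=
  ∀ π, G.Concretizes obs act π → ∃ lmax, 1 ≤ lmax ∧ ∀ i, G.GW ν i lmax π act

def UBnd (ν : ℚ) (obs : ℕ → Set G.Q) (act : ℕ → G.A) : Prop :=
  ∃ lmax, 1 ≤ lmax ∧ ∃ i, ∀ π, G.Concretizes obs act π → ∀ j, i ≤ j → G.GW ν j lmax π act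

def Bnd (ν : ℚ) (obs : ℕ → Set G.Q) (act : ℕ → G.A) : Prop :=
  ∀ π, G.Concretizes obs act π → ∃ lmax, 1 ≤ lmax ∧ ∃ i, ∀ j, i ≤ j → G.GW ν j lmax π act

noncomputable def MPinf (π : ℕ → G.Q) (act : ℕ → G.A) : ℝ :=
  Filter.liminf (fun n : ℕ => (G.winSum π act 0 n : ℝ) / (n : ℝ)) Filter.atTop

noncomputable def MPsup (π : ℕ → G.Q) (act : ℕ → G.A) : ℝ :=
  Filter.limsup (fun n : ℕ => (G.winSum π act 0 n : ℝ) / (n : ℝ)) Filter.atTop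

def MPInfObj (ν : ℚ) (obs : ℕ → Set G.Q) (act : ℕ → G.A) : Prop :=
  ∀ π, G.Concretizes obs act π → (ν : ℝ) ≤ G.MPinf π act

def MPSupObj (ν : ℚ) (obs : ℕ → Set G.Q) (act : ℕ → G.A) : Prop :=
  ∀ π, G.Concretizes obs act π → (ν : ℝ) ≤ G.MPsup π act

/-- The finite history (prefix) of a play after `n` steps, ending with `obs n`. -/
def hist (obs : ℕ → Set G.Q) (act : ℕ → G.A) (n : ℕ) : List (Set G.Q × G.A) :=
  (List.range n).map fun i => (obs i, act i)

/-- A play is consistent with an observation-based strategy of Eve. -/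
def Consistent (str : List (Set G.Q × G.A) → Set G.Q → G.A)
    (obs : ℕ → Set G.Q) (act : ℕ → G.A) : Prop :=
  ∀ n, act n = str (G.hist obs act n) (obs n)

/-- Eve wins an objective if some observation-based strategy forces it on all plays. -/
def Wins (V : (ℕ → Set G.Q) → (ℕ → G.A) → Prop) : Prop :=
  ∃ str : List (Set G.Q × G.A) → Set G.Q → G.A,
    ∀ obs act, G.IsPlay obs act → G.Consistent str obs act → V obs act

/-- σ-successors of a set of states. -/
def postSet (σ : G.A) (s : Set G.Q) : Set G.Q := {q' | ∃ q ∈ s, G.Δ q σ q'}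

end WGA

/-- The safety objective: no concretization of the play ever visits an unsafe state. -/
def WGA.SafeObj (G : WGA) (U : Set G.Q) (obs : ℕ → Set G.Q) (act : ℕ → G.A) : Prop :=
  ∀ π, G.Concretizes obs act π → ∀ i, π i ∉ U

namespace WGA

def IsTrap (G : WGA) (U : Set G.Q) : Prop :=
  ∀ u σ q, u ∈ U → G.Δ u σ q → q = u

def IsSafetyWeighting (G : WGA) (U : Set G.Q) : Prop :=
  ∀ p σ q, G.Δ p σ q → ((p ∈ U → G.w p σ q = -1) ∧ (p ∉ U → G.w p σ q = 0))

variable {G : WGA}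

theorem DirFix.uFix {ν : ℚ} {lmax : ℕ} {obs : ℕ → Set G.Q} {act : ℕ → G.A}
    (h : G.DirFix ν lmax obs act) : G.UFix ν lmax obs act :=
  ⟨0, fun π hc j _ => h π hc j⟩

theorem UFix.fix {ν : ℚ} {lmax : ℕ} {obs : ℕ → Set G.Q} {act : ℕ → G.A}
    (h : G.UFix ν lmax obs act) : G.Fix ν lmax obs act :=
  let ⟨i, hi⟩ := h
  fun π hc => ⟨i, hi π hc⟩

theorem Wins.mono {V V' : (ℕ → Set G.Q) → (ℕ → G.A) → Prop}
    (hV : ∀ obs act, V obs act → V' obs act) (h : G.Wins V) : G.Wins V' :=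
  let ⟨str, hstr⟩ := h
  ⟨str, fun obs act hp hc => hV obs act (hstr obs act hp hc)⟩

theorem winSum_zero_add (π : ℕ → G.Q) (act : ℕ → G.A) (k m : ℕ) :
    G.winSum π act 0 (k + m) = G.winSum π act 0 k + G.winSum π act k m := by
  simp only [winSum, Finset.sum_range_add, zero_add, add_assoc]

section SafetyWeighting

variable {U : Set G.Q} {obs : ℕ → Set G.Q} {act : ℕ → G.A} {π : ℕ → G.Q}

theorem Concretizes.mem_of_le (hU : G.IsTrap U) (hc : G.Concretizes obs act π)
    {k j : ℕ} (hk : π k ∈ U) (hkj : k ≤ j) : π j ∈ U := by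
  induction j, hkj using Nat.le_induction with
  | base => exact hk
  | succ n _ ih => rwa [hU _ _ _ ih (hc.2 n)]

theorem winSum_eq_zero_of_safe (hw : G.IsSafetyWeighting U) (hc : G.Concretizes obs act π)
    (hs : ∀ i, π i ∉ U) (i j : ℕ) : G.winSum π act i j = 0 :=
  Finset.sum_eq_zero fun k _ => (hw _ _ _ (hc.2 (i + k))).2 (hs (i + k))

theorem winSum_eq_neg_of_mem (hU : G.IsTrap U) (hw : G.IsSafetyWeighting U)
    (hc : G.Concretizes obs act π) {i : ℕ} (hi : π i ∈ U) (j : ℕ) :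
    G.winSum π act i j = -j := by
  have hstep : ∀ k ∈ Finset.range j, G.w (π (i + k)) (act (i + k)) (π (i + k + 1)) = -1 :=
    fun k _ => (hw _ _ _ (hc.2 (i + k))).1 (hc.mem_of_le hU hi (Nat.le_add_right i k))
  simp [winSum, Finset.sum_congr rfl hstep]

theorem gw_of_safe (hw : G.IsSafetyWeighting U) (hc : G.Concretizes obs act π)
    (hs : ∀ i, π i ∉ U) {ν : ℚ} (hν : ν ≤ 0) {lmax : ℕ} (hlmax : 1 ≤ lmax) (i : ℕ) :
    G.GW ν i lmax π act :=
  ⟨1, le_rfl, hlmax, by simpa [winSum_eq_zero_of_safe hw hc hs] using hν⟩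

theorem not_gw_of_mem (hU : G.IsTrap U) (hw : G.IsSafetyWeighting U)
    (hc : G.Concretizes obs act π) {i : ℕ} (hi : π i ∈ U) {ν : ℚ} (hν : -1 < ν) (lmax : ℕ) :
    ¬ G.GW ν i lmax π act := by
  rintro ⟨j, hj, -, hle⟩
  have hj : (j : ℚ) ≠ 0 := by positivity
  rw [winSum_eq_neg_of_mem hU hw hc hi, Int.cast_neg, Int.cast_natCast, neg_div,
    div_self hj] at hle
  linarith

theorem mpinf_eq_zero_of_safe (hw : G.IsSafetyWeighting U) (hc : G.Concretizes obs act π)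
    (hs : ∀ i, π i ∉ U) : G.MPinf π act = 0 := by
  simp [MPinf, winSum_eq_zero_of_safe hw hc hs]

theorem mpinf_eq_neg_one_of_mem (hU : G.IsTrap U) (hw : G.IsSafetyWeighting U)
    (hc : G.Concretizes obs act π) {k : ℕ} (hk : π k ∈ U) : G.MPinf π act = -1 := by
  set c : ℝ := G.winSum π act 0 k + k
  -- after entering `U` at step `k` every step costs `1`, so the prefix sum is `c - n`
  have hprefix : ∀ n, k ≤ n → (G.winSum π act 0 n : ℝ) = c - n := by
    intro n hn
    obtain ⟨m, rfl⟩ := Nat.exists_eq_add_of_le hn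
    rw [winSum_zero_add, winSum_eq_neg_of_mem hU hw hc hk]
    push_cast
    ring
  have hlim : Filter.Tendsto (fun n : ℕ => c / n - 1) Filter.atTop (nhds (-1)) := by
    simpa using (tendsto_const_div_atTop_nhds_zero_nat c).sub_const 1
  refine (hlim.congr' ?_).liminf_eq
  filter_upwards [Filter.eventually_ge_atTop (max k 1)] with n hn
  have hn0 : (n : ℝ) ≠ 0 := by
    have : 1 ≤ n := le_of_max_le_right hn
    positivity
  rw [hprefix n (le_of_max_le_left hn), sub_div, div_self hn0]

theorem SafeObj.mpInfObj (hw : G.IsSafetyWeighting U) (h : G.SafeObj U obs act)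
    {ν : ℚ} (hν : ν ≤ 0) : G.MPInfObj ν obs act := fun π hc => by
  rw [mpinf_eq_zero_of_safe hw hc (h π hc)]
  exact_mod_cast hν

theorem MPInfObj.safeObj (hU : G.IsTrap U) (hw : G.IsSafetyWeighting U) {ν : ℚ} (hν : -1 < ν)
    (h : G.MPInfObj ν obs act) : G.SafeObj U obs act := fun π hc k hk => by
  have := h π hc
  rw [mpinf_eq_neg_one_of_mem hU hw hc hk] at this
  have : (-1 : ℝ) < ν := by exact_mod_cast hν
  linarith

theorem SafeObj.dirFix (hw : G.IsSafetyWeighting U) (h : G.SafeObj U obs act)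
    {ν : ℚ} (hν : ν ≤ 0) {lmax : ℕ} (hlmax : 1 ≤ lmax) : G.DirFix ν lmax obs act :=
  fun π hc => gw_of_safe hw hc (h π hc) hν hlmax

theorem Fix.safeObj (hU : G.IsTrap U) (hw : G.IsSafetyWeighting U) {ν : ℚ} (hν : -1 < ν)
    {lmax : ℕ} (h : G.Fix ν lmax obs act) : G.SafeObj U obs act := fun π hc k hk => by
  obtain ⟨i, hi⟩ := h π hc
  exact not_gw_of_mem hU hw hc (hc.mem_of_le hU hk (le_max_right i k)) hν lmax
    (hi _ (le_max_left i k))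

end SafetyWeighting

end WGA

/-- Lemma 1, reduction: for a safety game with trapping unsafe states `U`,
weighted so that transitions leaving `U`-states cost `−1` and all others `0`,
winning safety is equivalent to winning `MPInf(0)`, `DirFix(0,lmax)`, `UFix(0,lmax)`
and `Fix(0,lmax)`, for any `lmax ≥ 1`. -/
theorem safety_reduction (G : WGA) (U : Set G.Q)
    (htrap : ∀ u σ q, u ∈ U → G.Δ u σ q → q = u)
    (hw : ∀ p σ q, G.Δ p σ q →
      ((p ∈ U → G.w p σ q = -1) ∧ (p ∉ U → G.w p σ q = 0)))
    (lmax : ℕ) (hlmax : 1 ≤ lmax) :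
    (G.Wins (G.SafeObj U) ↔ G.Wins (G.MPInfObj 0)) ∧
    (G.Wins (G.SafeObj U) ↔ G.Wins (G.DirFix 0 lmax)) ∧
    (G.Wins (G.SafeObj U) ↔ G.Wins (G.UFix 0 lmax)) ∧
    (G.Wins (G.SafeObj U) ↔ G.Wins (G.Fix 0 lmax)) := by
  have hν : (-1 : ℚ) < 0 := by norm_num
  have safe_dirFix : G.Wins (G.SafeObj U) → G.Wins (G.DirFix 0 lmax) :=
    .mono fun _ _ h => h.dirFix hw le_rfl hlmax
  have dirFix_uFix : G.Wins (G.DirFix 0 lmax) → G.Wins (G.UFix 0 lmax) :=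
    .mono fun _ _ h => h.uFix
  have uFix_fix : G.Wins (G.UFix 0 lmax) → G.Wins (G.Fix 0 lmax) :=
    .mono fun _ _ h => h.fix
  have fix_safe : G.Wins (G.Fix 0 lmax) → G.Wins (G.SafeObj U) :=
    .mono fun _ _ h => h.safeObj htrap hw hν
  refine ⟨⟨.mono fun _ _ h => h.mpInfObj hw le_rfl,
      .mono fun _ _ h => h.safeObj htrap hw hν⟩, ?_, ?_, ?_⟩
  · exact ⟨safe_dirFix, fun h => fix_safe (uFix_fix (dirFix_uFix h))⟩
  · exact ⟨fun h => dirFix_uFix (safe_dirFix h), fun h => fix_safe (uFix_fix h)⟩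
  · exact ⟨fun h => uFix_fix (dirFix_uFix (safe_dirFix h)), fix_safe⟩
end

section
/- Let ρ = o_0σ_0o_1…o_n be an abstract path of a WGA G, let lmax ≥ 1, let φ ∈ 𝓕 with supp(φ) ⊆ o_0, and let supp⁻¹(ρ,φ) = f_0σ_0f_1…f_n. Let p ∈ supp(f_n), 1 ≤ l ≤ lmax with l ≤ n, and set λ = n − l. Then the following three statements are equivalent: (C1) there is a concrete path q_0σ_0…q_n with q_i ∈ o_i for all i, q_n = p and q_0 ∈ supp(φ), such that Σ_{j=n−l}^{m} w(q_j,σ_j,q_{j+1}) < 0 for all m with n−l ≤ m < n; (C2) f_n(p)_l < 0; (C3) there is a concrete path q_0σ_0…q_n with q_i ∈ o_i for all i, q_n = p and q_0 ∈ supp(φ), such that (a) f_j(q_j)_{j−λ} < 0 for all λ < j ≤ n, and (b) f_k(q_k)_{k−λ} + w(q_k,σ_k,q_{k+1}) = f_{k+1}(q_{k+1})_{k−λ+1} for all λ < k < n. -/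
open scoped Classical

namespace WGA

variable (G : WGA)

/-- Elements of the function space 𝓕 (validity constraints are given by `ValidF`). -/
def FMap := G.Q → Option (ℕ → ℤ)

/-- The support of an element of 𝓕. -/
def fsupp (f : FMap G) : Set G.Q := {q | f q ≠ none}

/-- `f(q)_i`, the value of `f` at state `q` and window index `i`. -/
def fval (f : FMap G) (q : G.Q) (i : ℕ) : ℤ := ((f q).getD fun _ => 0) i

/-- Membership in 𝓕: values at indices `1,…,lmax` lie in `{−W·lmax,…,0}`
(values at other indices are normalized to `0`). -/
def ValidF (lmax W : ℕ) (f : FMap G) : Prop :=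
  ∀ q g, f q = some g →
    (∀ i, 1 ≤ i → i ≤ lmax → -((W : ℤ) * (lmax : ℤ)) ≤ g i ∧ g i ≤ 0) ∧
    (∀ i, i = 0 ∨ lmax < i → g i = 0)

def Fset (lmax W : ℕ) : Set (FMap G) := {f | G.ValidF lmax W f}

/-- The set whose minimum is `ζ(q)` in the definition of σ-successor. -/
def zetaSet (f1 : FMap G) (σ : G.A) (q : G.Q) (j : ℕ) : Set ℤ :=
  if j = 1 then {x | ∃ p ∈ G.fsupp f1, G.Δ p σ q ∧ x = G.w p σ q}
  else {x | ∃ p ∈ G.fsupp f1, G.Δ p σ q ∧ G.fval f1 p (j - 1) < 0 ∧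
        x = G.fval f1 p (j - 1) + G.w p σ q}

/-- `v = max(−W·lmax, min(0, min Z))`, where the minimum of the empty set is `+∞`. -/
def succVal (lmax W : ℕ) (Z : Set ℤ) (v : ℤ) : Prop :=
  (Z = ∅ ∧ v = max (-((W : ℤ) * (lmax : ℤ))) 0) ∨
  ∃ z, IsLeast Z z ∧ v = max (-((W : ℤ) * (lmax : ℤ))) (min 0 z)

/-- `f2` is a σ-successor of `f1`. -/
def IsSucc (lmax W : ℕ) (f1 : FMap G) (σ : G.A) (f2 : FMap G) : Prop :=
  G.ValidF lmax W f2 ∧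
  (∃ o ∈ G.Obs, G.fsupp f2 = G.postSet σ (G.fsupp f1) ∩ o) ∧
  ∀ q ∈ G.fsupp f2, ∀ j, 1 ≤ j → j ≤ lmax →
    succVal lmax W (G.zetaSet f1 σ q j) (G.fval f2 q j)

/-- The initial function `f_I`. -/
noncomputable def fI : FMap G := fun q => if q = G.qI then some (fun _ => 0) else none

/-- The unsafe set 𝒰 ⊆ 𝓕. -/
def FU (lmax W : ℕ) : Set (FMap G) :=
  {f | G.ValidF lmax W f ∧ ∃ q ∈ G.fsupp f, G.fval f q lmax < 0}

/-- The partial order ⪯ on 𝓕. -/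
def Preceq (lmax : ℕ) (f g : FMap G) : Prop :=
  G.fsupp f ⊆ G.fsupp g ∧
  ∀ q ∈ G.fsupp f, ∀ i, 1 ≤ i → i ≤ lmax →
    ∃ j, i ≤ j ∧ j ≤ lmax ∧ G.fval g q j ≤ G.fval f q i

/-- Upward-closedness (within 𝓕) with respect to ⪯. -/
def UpClosed (lmax W : ℕ) (S : Set (FMap G)) : Prop :=
  ∀ f ∈ S, ∀ g ∈ G.Fset lmax W, G.Preceq lmax f g → g ∈ S

/-- Uncontrollable predecessors in the game `G'`. -/
def upreF (lmax W : ℕ) (S : Set (FMap G)) : Set (FMap G) :=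
  {p | G.ValidF lmax W p ∧ ∀ σ : G.A, ∃ f2 ∈ S, G.IsSucc lmax W p σ f2}

/-- The set of ⪯-minimal elements of `T`. -/
def minimal (lmax : ℕ) (T : Set (FMap G)) : Set (FMap G) :=
  {x | x ∈ T ∧ ∀ y ∈ T, G.Preceq lmax y x → y = x}

/-- The antichain version ⌊upre⌋ of the uncontrollable-predecessors operator. -/
def acUpre (lmax W : ℕ) (a : Set (FMap G)) : Set (FMap G) :=
  G.minimal lmax {p | G.ValidF lmax W p ∧ p ∉ G.FU lmax W ∧
    ∀ σ : G.A, ∃ q' ∈ a, ∃ r', G.IsSucc lmax W p σ r' ∧ G.Preceq lmax q' r'}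

/-- Upward closure within 𝓕. -/
def upSet (lmax W : ℕ) (T : Set (FMap G)) : Set (FMap G) :=
  {g | g ∈ G.Fset lmax W ∧ ∃ f ∈ T, G.Preceq lmax f g}

/-- Histories of the perfect-information game `G'`. -/
def histP (fs : ℕ → FMap G) (act : ℕ → G.A) (n : ℕ) : List (FMap G × G.A) :=
  (List.range n).map fun i => (fs i, act i)

/-- The given strategy of Eve is winning for the safety objective of `G'`:
every consistent play (a sequence of σ-successor moves from `f_I`) avoids 𝒰. -/
def WinsSafeP (lmax W : ℕ) (str : List (FMap G × G.A) → FMap G → G.A) : Prop :=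
  ∀ fs : ℕ → FMap G, ∀ act : ℕ → G.A,
    fs 0 = G.fI →
    (∀ i, G.IsSucc lmax W (fs i) (act i) (fs (i + 1))) →
    (∀ n, act n = str (G.histP fs act n) (fs n)) →
    ∀ i, fs i ∉ G.FU lmax W

/-- The monotone map `X ↦ 𝒰 ∪ upre(X)` on the powerset lattice of 𝓕. -/
def safeOp (lmax W : ℕ) : Set (FMap G) →o Set (FMap G) where
  toFun X := G.FU lmax W ∪ G.upreF lmax W X
  monotone' := by
    intro X Y hXY f hf
    rcases hf with hf | hf
    · exact Or.inl hf
    · refine Or.inr ⟨hf.1, fun σ => ?_⟩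
      obtain ⟨f2, hf2, hs⟩ := hf.2 σ
      exact ⟨f2, hXY hf2, hs⟩

end WGA

/-! Going backwards through the σ-successors, a negative entry `f_n(p)_l` is always attained, up to
the clamp at `−W·lmax`, by a predecessor `p'` with `f_{n-1}(p')_{l-1} < 0` (if `l > 1`); unfolding this `l` times
gives a concrete path whose window sums from `n − l` are exactly the entries `f_j(q_j)_{j-(n-l)}`,
all negative. Conversely, along any concrete path with negative window sums each entry is at most the
corresponding window sum. In both directions the clamp is inactive, since a window of at most
`lmax` transitions has weight at least `−W·lmax`. -/

namespace WGA

variable {G : WGA} {lmax W : ℕ}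

theorem mem_zetaSet_one {f : FMap G} {σ : G.A} {q : G.Q} {x : ℤ} :
    x ∈ G.zetaSet f σ q 1 ↔ ∃ p ∈ G.fsupp f, G.Δ p σ q ∧ x = G.w p σ q := by
  simp [zetaSet]

theorem mem_zetaSet_succ {f : FMap G} {σ : G.A} {q : G.Q} {x : ℤ} {j : ℕ} (hj : j ≠ 0) :
    x ∈ G.zetaSet f σ q (j + 1) ↔
      ∃ p ∈ G.fsupp f, G.Δ p σ q ∧ G.fval f p j < 0 ∧ x = G.fval f p j + G.w p σ q := by
  simp [zetaSet, hj]

theorem succVal.le_of_mem {Z : Set ℤ} {v z s : ℤ} (h : succVal lmax W Z v) (hz : z ∈ Z)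
    (hzs : z ≤ s) (hs : -((W : ℤ) * lmax) ≤ s) : v ≤ s := by
  rcases h with ⟨rfl, -⟩ | ⟨z₀, hz₀, rfl⟩
  · exact absurd hz (Set.notMem_empty z)
  · exact max_le hs ((min_le_right 0 z₀).trans ((hz₀.2 hz).trans hzs))

theorem succVal.exists_mem_of_neg {Z : Set ℤ} {v : ℤ} (h : succVal lmax W Z v) (hv : v < 0) :
    ∃ z ∈ Z, z < 0 ∧ v = max (-((W : ℤ) * lmax)) z := by
  rcases h with ⟨-, rfl⟩ | ⟨z, hz, rfl⟩
  · exact absurd hv (not_lt.2 (le_max_right _ _))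
  · have hz0 : z < 0 := by simpa using (le_max_right _ _).trans_lt hv
    exact ⟨z, hz.1, hz0, by rw [min_eq_right hz0.le]⟩

theorem IsSucc.mem_fsupp_of_mem_obs {f g : FMap G} {σ : G.A} {o : Set G.Q} {p q : G.Q}
    (h : G.IsSucc lmax W f σ g) (ho : o ∈ G.Obs) (hgo : G.fsupp g ⊆ o)
    (hne : (G.fsupp g).Nonempty) (hp : p ∈ G.fsupp f) (hpq : G.Δ p σ q) (hq : q ∈ o) :
    q ∈ G.fsupp g := by
  obtain ⟨o', ho', hg⟩ := h.2.1
  obtain ⟨r, hr⟩ := hne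
  have : o' = o := (G.obs_partition r).unique ⟨ho', (hg.le hr).2⟩ ⟨ho, hgo hr⟩
  rw [hg, this]
  exact ⟨⟨p, hp, hpq⟩, hq⟩

theorem winSum_succ (π : ℕ → G.Q) (act : ℕ → G.A) (a j : ℕ) :
    G.winSum π act a (j + 1) =
      G.winSum π act a j + G.w (π (a + j)) (act (a + j)) (π (a + j + 1)) :=
  Finset.sum_range_succ _ _

theorem winSum_congr {π π' : ℕ → G.Q} {act : ℕ → G.A} {a j : ℕ}
    (h : ∀ m, a ≤ m → m ≤ a + j → π m = π' m) : G.winSum π act a j = G.winSum π' act a j :=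
  Finset.sum_congr rfl fun k hk => by
    have := Finset.mem_range.1 hk
    rw [h (a + k) (by omega) (by omega), h (a + k + 1) (by omega) (by omega)]

theorem sum_Icc_eq_winSum (π : ℕ → G.Q) (act : ℕ → G.A) (a m : ℕ) :
    ∑ i ∈ Finset.Icc a m, G.w (π i) (act i) (π (i + 1)) = G.winSum π act a (m + 1 - a) := by
  rw [← Finset.Ico_add_one_right_eq_Icc, Finset.sum_Ico_eq_sum_range]
  rfl

theorem neg_mul_le_winSum {π : ℕ → G.Q} {act : ℕ → G.A} {a j : ℕ}
    (hW : ∀ p σ q, G.Δ p σ q → |G.w p σ q| ≤ (W : ℤ)) (hj : j ≤ lmax)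
    (hπ : ∀ m, a ≤ m → m < a + j → G.Δ (π m) (act m) (π (m + 1))) :
    -((W : ℤ) * lmax) ≤ G.winSum π act a j := by
  have hsum := Finset.card_nsmul_le_sum (Finset.range j) _ (-(W : ℤ)) fun k hk =>
    neg_le_of_abs_le (hW _ _ _ (hπ (a + k) (by omega) (by simp at hk; omega)))
  rw [Finset.card_range, nsmul_eq_mul] at hsum
  have : (W : ℤ) * j ≤ W * lmax := by gcongr
  unfold winSum
  linarith

section Runs

variable {fs : ℕ → FMap G} {act : ℕ → G.A}

def IsRun (fs : ℕ → FMap G) (act : ℕ → G.A) (c : ℕ → G.Q) (a b : ℕ) : Prop :=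
  (∀ m, a ≤ m → m ≤ b → c m ∈ G.fsupp (fs m)) ∧
    ∀ m, a ≤ m → m < b → G.Δ (c m) (act m) (c (m + 1))

theorem isRun_const {a : ℕ} {p : G.Q} (hp : p ∈ G.fsupp (fs a)) :
    IsRun fs act (fun _ => p) a a :=
  ⟨fun _ h₁ h₂ => le_antisymm h₂ h₁ ▸ hp, fun _ h₁ h₂ => absurd h₂ (not_lt.2 h₁)⟩

theorem IsRun.mono {c : ℕ → G.Q} {a b a' b' : ℕ} (h : IsRun fs act c a b) (ha : a ≤ a')
    (hb : b' ≤ b) : IsRun fs act c a' b' :=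
  ⟨fun m h₁ h₂ => h.1 m (ha.trans h₁) (h₂.trans hb),
    fun m h₁ h₂ => h.2 m (ha.trans h₁) (h₂.trans_le hb)⟩

theorem IsRun.snoc {c : ℕ → G.Q} {a b : ℕ} {q : G.Q} (h : IsRun fs act c a b)
    (hq : q ∈ G.fsupp (fs (b + 1))) (hcq : G.Δ (c b) (act b) q) :
    IsRun fs act (Function.update c (b + 1) q) a (b + 1) := by
  constructor
  · intro m h₁ h₂
    rcases h₂.lt_or_eq with h₂ | rfl
    · rw [Function.update_of_ne (by omega)]
      exact h.1 m h₁ (by omega)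
    · rwa [Function.update_self]
  · intro m h₁ h₂
    rw [Function.update_of_ne (by omega : m ≠ b + 1)]
    rcases (Nat.lt_succ_iff.1 h₂).lt_or_eq with h₂ | rfl
    · rw [Function.update_of_ne (by omega)]
      exact h.2 m h₁ h₂
    · rwa [Function.update_self]

theorem exists_isRun_of_mem_fsupp {b : ℕ} {q : G.Q}
    (hsucc : ∀ k < b, G.IsSucc lmax W (fs k) (act k) (fs (k + 1)))
    (hq : q ∈ G.fsupp (fs b)) : ∃ c, IsRun fs act c 0 b ∧ c b = q := by
  induction b generalizing q with
  | zero => exact ⟨fun _ => q, isRun_const hq, rfl⟩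
  | succ b ih =>
    obtain ⟨o, -, hsupp⟩ := (hsucc b b.lt_succ_self).2.1
    obtain ⟨p, hp, hpq⟩ := (hsupp.le hq).1
    obtain ⟨c, hc, rfl⟩ := ih (fun k hk => hsucc k (hk.trans b.lt_succ_self)) hp
    exact ⟨_, hc.snoc hq hpq, Function.update_self ..⟩

theorem isRun_of_mem_obs {obs : ℕ → Set G.Q} {c : ℕ → G.Q} {n : ℕ}
    (hsucc : ∀ i < n,
      G.IsSucc lmax W (fs i) (act i) (fs (i + 1)) ∧ G.fsupp (fs (i + 1)) ⊆ obs (i + 1))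
    (hobs : ∀ i ≤ n, obs i ∈ G.Obs) (hne : ∀ i ≤ n, (G.fsupp (fs i)).Nonempty)
    (hc : ∀ i ≤ n, c i ∈ obs i) (hcΔ : ∀ i < n, G.Δ (c i) (act i) (c (i + 1)))
    (hc0 : c 0 ∈ G.fsupp (fs 0)) : IsRun fs act c 0 n := by
  refine ⟨fun m _ hm => ?_, fun m _ hm => hcΔ m hm⟩
  induction m with
  | zero => exact hc0
  | succ m ih =>
    exact (hsucc m hm).1.mem_fsupp_of_mem_obs (hobs _ hm) (hsucc m hm).2 (hne _ hm)
      (ih m.zero_le (by omega)) (hcΔ m hm) (hc _ hm)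

theorem fval_le_winSum {c : ℕ → G.Q} {a j : ℕ}
    (hW : ∀ p σ q, G.Δ p σ q → |G.w p σ q| ≤ (W : ℤ))
    (hsucc : ∀ k < a + j, G.IsSucc lmax W (fs k) (act k) (fs (k + 1)))
    (hc : IsRun fs act c a (a + j)) (hj : 1 ≤ j) (hjl : j ≤ lmax)
    (hneg : ∀ i, 1 ≤ i → i < j → G.winSum c act a i < 0) :
    G.fval (fs (a + j)) (c (a + j)) j ≤ G.winSum c act a j := by
  induction j, hj using Nat.le_induction with
  | base =>
    refine ((hsucc a (by omega)).2.2 _ (hc.1 _ (by omega) le_rfl) 1 le_rfl hjl).le_of_mem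
      (mem_zetaSet_one.2 ⟨c a, hc.1 a le_rfl (by omega), hc.2 a le_rfl (by omega), rfl⟩)
      ?_ (neg_mul_le_winSum hW hjl hc.2)
    simp [winSum]
  | succ j hj ih =>
    have hprev := ih (fun k hk => hsucc k (by omega)) (hc.mono le_rfl (by omega)) (by omega)
      fun i h₁ h₂ => hneg i h₁ (by omega)
    refine ((hsucc (a + j) (by omega)).2.2 _ (hc.1 _ (by omega) le_rfl) (j + 1) (by omega)
      hjl).le_of_mem ((mem_zetaSet_succ (by omega)).2 ⟨c (a + j), hc.1 _ (by omega) (by omega),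
        hc.2 _ (by omega) (by omega), hprev.trans_lt (hneg j hj (by omega)), rfl⟩)
      ?_ (neg_mul_le_winSum hW hjl hc.2)
    rw [winSum_succ]
    linarith

def IsTightRun (fs : ℕ → FMap G) (act : ℕ → G.A) (c : ℕ → G.Q) (a j : ℕ) : Prop :=
  IsRun fs act c 0 (a + j) ∧ ∀ i, 1 ≤ i → i ≤ j →
    G.fval (fs (a + i)) (c (a + i)) i = G.winSum c act a i ∧ G.winSum c act a i < 0

theorem IsTightRun.snoc {c : ℕ → G.Q} {a j : ℕ} {q : G.Q}
    (hW : ∀ p σ q, G.Δ p σ q → |G.w p σ q| ≤ (W : ℤ)) (hc : IsTightRun fs act c a j)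
    (hj : j + 1 ≤ lmax) (hq : q ∈ G.fsupp (fs (a + j + 1)))
    (hcq : G.Δ (c (a + j)) (act (a + j)) q)
    (hneg : G.winSum c act a j + G.w (c (a + j)) (act (a + j)) q < 0)
    (hval : G.fval (fs (a + j + 1)) q (j + 1) =
      max (-((W : ℤ) * lmax)) (G.winSum c act a j + G.w (c (a + j)) (act (a + j)) q)) :
    IsTightRun fs act (Function.update c (a + j + 1) q) a (j + 1) := by
  have hrun := hc.1.snoc hq hcq
  have hlow : ∀ i ≤ j, G.winSum (Function.update c (a + j + 1) q) act a i = G.winSum c act a i :=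
    fun i hi => winSum_congr fun m _ hm => Function.update_of_ne (by omega) _ _
  have hlast : G.winSum (Function.update c (a + j + 1) q) act a (j + 1) =
      G.winSum c act a j + G.w (c (a + j)) (act (a + j)) q := by
    rw [winSum_succ, hlow j le_rfl, Function.update_of_ne (by omega), Function.update_self]
  refine ⟨hrun, fun i h₁ h₂ => ?_⟩
  rcases h₂.lt_or_eq with h₂ | rfl
  · rw [hlow i (by omega), Function.update_of_ne (by omega)]
    exact hc.2 i h₁ (by omega)
  · have hbound := neg_mul_le_winSum hW hj (hrun.mono (Nat.zero_le a) le_rfl).2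
    rw [hlast] at hbound ⊢
    rw [← add_assoc, Function.update_self, hval, max_eq_right hbound]
    exact ⟨rfl, hneg⟩

theorem exists_isTightRun_of_fval_neg {a j : ℕ} {q : G.Q}
    (hW : ∀ p σ q, G.Δ p σ q → |G.w p σ q| ≤ (W : ℤ))
    (hsucc : ∀ k < a + j, G.IsSucc lmax W (fs k) (act k) (fs (k + 1)))
    (hj : 1 ≤ j) (hjl : j ≤ lmax) (hq : q ∈ G.fsupp (fs (a + j)))
    (hneg : G.fval (fs (a + j)) q j < 0) :
    ∃ c, IsTightRun fs act c a j ∧ c (a + j) = q := by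
  induction j, hj using Nat.le_induction generalizing q with
  | base =>
    obtain ⟨x, hx, hx0, hval⟩ :=
      ((hsucc a (by omega)).2.2 q hq 1 le_rfl hjl).exists_mem_of_neg hneg
    obtain ⟨p, hp, hpq, rfl⟩ := mem_zetaSet_one.1 hx
    obtain ⟨c, hc, rfl⟩ := exists_isRun_of_mem_fsupp (fun k hk => hsucc k (by omega)) hp
    have hc' : IsTightRun fs act c a 0 := ⟨hc, fun i h₁ h₂ => absurd h₁ (by omega)⟩
    exact ⟨_, hc'.snoc hW hjl hq hpq (by simpa [winSum] using hx0)
      (by simpa [winSum] using hval), Function.update_self ..⟩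
  | succ j hj ih =>
    obtain ⟨x, hx, hx0, hval⟩ :=
      ((hsucc (a + j) (by omega)).2.2 q hq (j + 1) (by omega) hjl).exists_mem_of_neg hneg
    obtain ⟨p, hp, hpq, hp0, rfl⟩ := (mem_zetaSet_succ (by omega)).1 hx
    obtain ⟨c, hc, rfl⟩ := ih (fun k hk => hsucc k (by omega)) (by omega) hp hp0
    rw [(hc.2 j hj le_rfl).1] at hx0 hval
    exact ⟨_, hc.snoc hW hjl hq hpq hx0 hval, Function.update_self ..⟩

theorem IsTightRun.sum_Icc_neg {c : ℕ → G.Q} {a l : ℕ} (hc : IsTightRun fs act c a l) (m : ℕ)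
    (h₁ : a ≤ m) (h₂ : m < a + l) :
    ∑ i ∈ Finset.Icc a m, G.w (c i) (act i) (c (i + 1)) < 0 := by
  rw [sum_Icc_eq_winSum]
  exact (hc.2 _ (by omega) (by omega)).2

theorem IsTightRun.fval_neg {c : ℕ → G.Q} {a l : ℕ} (hc : IsTightRun fs act c a l) (k : ℕ)
    (h₁ : a < k) (h₂ : k ≤ a + l) : G.fval (fs k) (c k) (k - a) < 0 := by
  obtain ⟨i, rfl⟩ : ∃ i, k = a + i := ⟨k - a, by omega⟩
  rw [Nat.add_sub_cancel_left, (hc.2 i (by omega) (by omega)).1]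
  exact (hc.2 i (by omega) (by omega)).2

theorem IsTightRun.fval_add_w {c : ℕ → G.Q} {a l : ℕ} (hc : IsTightRun fs act c a l) (k : ℕ)
    (h₁ : a < k) (h₂ : k < a + l) :
    G.fval (fs k) (c k) (k - a) + G.w (c k) (act k) (c (k + 1)) =
      G.fval (fs (k + 1)) (c (k + 1)) (k - a + 1) := by
  obtain ⟨i, rfl⟩ : ∃ i, k = a + i := ⟨k - a, by omega⟩
  have hnext := (hc.2 (i + 1) (by omega) (by omega)).1
  rw [← add_assoc] at hnext
  rw [Nat.add_sub_cancel_left, (hc.2 i (by omega) (by omega)).1, hnext, winSum_succ]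

end Runs

end WGA

theorem magic_lemma_general (G : WGA) (lmax W : ℕ)
    (hW : ∀ p σ q, G.Δ p σ q → |G.w p σ q| ≤ (W : ℤ))
    (n : ℕ) (obs : ℕ → Set G.Q) (act : ℕ → G.A)
    (hobs : ∀ i, i ≤ n → obs i ∈ G.Obs)
    (φ : WGA.FMap G) (hφ0 : G.fsupp φ ⊆ obs 0)
    (fs : ℕ → WGA.FMap G) (hf0 : fs 0 = φ)
    (hsucc : ∀ i, i < n →
      G.IsSucc lmax W (fs i) (act i) (fs (i + 1)) ∧ G.fsupp (fs (i + 1)) ⊆ obs (i + 1))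
    (p : G.Q) (hp : p ∈ G.fsupp (fs n)) (l : ℕ) (hl1 : 1 ≤ l) (hllmax : l ≤ lmax)
    (hln : l ≤ n) :
    -- C1 ↔ C2
    ((∃ c : ℕ → G.Q, (∀ i, i ≤ n → c i ∈ obs i) ∧
        (∀ i, i < n → G.Δ (c i) (act i) (c (i + 1))) ∧
        c 0 ∈ G.fsupp φ ∧ c n = p ∧
        ∀ m, n - l ≤ m → m < n →
          (∑ j ∈ Finset.Icc (n - l) m, G.w (c j) (act j) (c (j + 1))) < 0) ↔
      G.fval (fs n) p l < 0) ∧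
    -- C2 ↔ C3
    (G.fval (fs n) p l < 0 ↔
      ∃ c : ℕ → G.Q, (∀ i, i ≤ n → c i ∈ obs i) ∧
        (∀ i, i < n → G.Δ (c i) (act i) (c (i + 1))) ∧
        c 0 ∈ G.fsupp φ ∧ c n = p ∧
        (∀ j, n - l < j → j ≤ n → G.fval (fs j) (c j) (j - (n - l)) < 0) ∧
        (∀ k, n - l < k → k < n →
          G.fval (fs k) (c k) (k - (n - l)) + G.w (c k) (act k) (c (k + 1)) =
            G.fval (fs (k + 1)) (c (k + 1)) (k - (n - l) + 1))) := by
  obtain ⟨a, rfl⟩ : ∃ a, n = a + l := ⟨n - l, by omega⟩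
  rw [Nat.add_sub_cancel]
  subst hf0
  have hstep := fun k hk => (hsucc k hk).1
  have hsupp : ∀ k ≤ a + l, G.fsupp (fs k) ⊆ obs k
    | 0, _ => hφ0
    | k + 1, hk => (hsucc k hk).2
  have hwit : G.fval (fs (a + l)) p l < 0 → ∃ c, WGA.IsTightRun fs act c a l ∧ c (a + l) = p :=
    WGA.exists_isTightRun_of_fval_neg hW hstep hl1 hllmax hp
  refine ⟨⟨?_, fun hneg => ?_⟩, ⟨fun hneg => ?_, ?_⟩⟩
  · rintro ⟨c, hc, hcΔ, hc0, rfl, hsum⟩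
    obtain ⟨e, he, -⟩ := WGA.exists_isRun_of_mem_fsupp hstep hp
    have hrun := WGA.isRun_of_mem_obs hsucc hobs (fun k hk => ⟨e k, he.1 k k.zero_le hk⟩)
      hc hcΔ hc0
    have hwin : ∀ i, 1 ≤ i → i ≤ l → G.winSum c act a i < 0 := fun i h₁ h₂ => by
      have := hsum (a + i - 1) (by omega) (by omega)
      rwa [WGA.sum_Icc_eq_winSum, show a + i - 1 + 1 - a = i by omega] at this
    exact (WGA.fval_le_winSum hW hstep (hrun.mono a.zero_le le_rfl) hl1 hllmax
      fun i h₁ h₂ => hwin i h₁ h₂.le).trans_lt (hwin l hl1 le_rfl)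
  · obtain ⟨c, hc, rfl⟩ := hwit hneg
    exact ⟨c, fun i hi => hsupp i hi (hc.1.1 i i.zero_le hi), fun i hi => hc.1.2 i i.zero_le hi,
      hc.1.1 0 le_rfl (Nat.zero_le _), rfl, hc.sum_Icc_neg⟩
  · obtain ⟨c, hc, rfl⟩ := hwit hneg
    exact ⟨c, fun i hi => hsupp i hi (hc.1.1 i i.zero_le hi), fun i hi => hc.1.2 i i.zero_le hi,
      hc.1.1 0 le_rfl (Nat.zero_le _), rfl, hc.fval_neg, hc.fval_add_w⟩
  · rintro ⟨c, -, -, -, rfl, hneg, -⟩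
    simpa using hneg (a + l) (by omega) le_rfl

/-- Lemma 8, appendix: equivalence of the three conditions C1, C2, C3,
where `λ = n − l`. -/
theorem magic_lemma (G : WGA) (lmax W : ℕ) (hlmax : 1 ≤ lmax)
    (hW : ∀ p σ q, G.Δ p σ q → |G.w p σ q| ≤ (W : ℤ))
    (n : ℕ) (obs : ℕ → Set G.Q) (act : ℕ → G.A)
    (hobs : ∀ i, i ≤ n → obs i ∈ G.Obs)
    (habs : ∃ c : ℕ → G.Q, (∀ i, i ≤ n → c i ∈ obs i) ∧
      ∀ i, i < n → G.Δ (c i) (act i) (c (i + 1)))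
    (φ : WGA.FMap G) (hφ : G.ValidF lmax W φ) (hφ0 : G.fsupp φ ⊆ obs 0)
    (fs : ℕ → WGA.FMap G) (hf0 : fs 0 = φ)
    (hsucc : ∀ i, i < n →
      G.IsSucc lmax W (fs i) (act i) (fs (i + 1)) ∧ G.fsupp (fs (i + 1)) ⊆ obs (i + 1))
    (p : G.Q) (hp : p ∈ G.fsupp (fs n)) (l : ℕ) (hl1 : 1 ≤ l) (hllmax : l ≤ lmax)
    (hln : l ≤ n) :
    -- C1 ↔ C2
    ((∃ c : ℕ → G.Q, (∀ i, i ≤ n → c i ∈ obs i) ∧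
        (∀ i, i < n → G.Δ (c i) (act i) (c (i + 1))) ∧
        c 0 ∈ G.fsupp φ ∧ c n = p ∧
        ∀ m, n - l ≤ m → m < n →
          (∑ j ∈ Finset.Icc (n - l) m, G.w (c j) (act j) (c (j + 1))) < 0) ↔
      G.fval (fs n) p l < 0) ∧
    -- C2 ↔ C3
    (G.fval (fs n) p l < 0 ↔
      ∃ c : ℕ → G.Q, (∀ i, i ≤ n → c i ∈ obs i) ∧
        (∀ i, i < n → G.Δ (c i) (act i) (c (i + 1))) ∧
        c 0 ∈ G.fsupp φ ∧ c n = p ∧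
        (∀ j, n - l < j → j ≤ n → G.fval (fs j) (c j) (j - (n - l)) < 0) ∧
        (∀ k, n - l < k → k < n →
          G.fval (fs k) (c k) (k - (n - l)) + G.w (c k) (act k) (c (k + 1)) =
            G.fval (fs (k + 1)) (c (k + 1)) (k - (n - l) + 1))) :=
  magic_lemma_general G lmax W hW n obs act hobs φ hφ0 fs hf0 hsucc p hp l hl1 hllmax hln
end
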